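/- arXiv:cs/0703056 — 2 statements merged into one kernel-verified Lean document; each statement's English description precedes it below -/
import Mathlib

section
/- There exists M₀ ≥ 32 such that for every real M ≥ M₀, setting k = 4 and ε = 5/√M, there is an admissible α (i.e., 16/M ≤ α < 1) for which (k^{k/2} / (e^{k/3} M^{k/2})) · ( α^{k/2}/(1 − α)^k + 4^{k/2} / (α^{k/2} ε^k (2^{k/2} − 1)) ) ≤ 1/20. Equivalently, with 4-wise independent hashing and memory budget M sufficiently large, the Gibbons–Tirthapura failure-probability bound at relative precision ε = 5/√M is at most 1/20, i.e., the estimator achieves relative precision 5/√M at least 19 times out of 20. -/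
theorem gibbons_tirthapura_corollary_reliability :
    ∃ M₀ : ℝ, 32 ≤ M₀ ∧ ∀ M : ℝ, M₀ ≤ M →
      ∃ α : ℝ, 16 / M ≤ α ∧ α < 1 ∧
        16 / (Real.exp (4 / 3) * M ^ 2) *
            (α ^ 2 / (1 - α) ^ 4 +
              16 / (α ^ 2 * (5 / Real.sqrt M) ^ 4 * 3)) ≤ 1 / 20 := by
  refine ⟨10000, by norm_num, fun M hM => ⟨9/10, ?_, by norm_num, ?_⟩⟩
  · rw [div_le_iff₀ (by linarith)]; linarith
  · have hMpos : (0:ℝ) < M := by linarith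
    have hs : Real.sqrt M ^ 2 = M := Real.sq_sqrt hMpos.le
    have hspos : 0 < Real.sqrt M := Real.sqrt_pos.mpr hMpos
    have heps : (5 / Real.sqrt M) ^ 4 = 625 / M ^ 2 := by
      rw [div_pow, show (Real.sqrt M) ^ 4 = (Real.sqrt M ^ 2) ^ 2 by ring, hs]
      norm_num
    rw [heps]
    have hE : (3.62:ℝ) ≤ Real.exp (4/3) := by
      have h1 : Real.exp (4/3) = Real.exp 1 * Real.exp (1/3) := by
        rw [← Real.exp_add]; norm_num
      have h2 : (1:ℝ) + 1/3 ≤ Real.exp (1/3) := by linarith [Real.add_one_le_exp (1/3:ℝ)]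
      have h3 : (2.7182818:ℝ) < Real.exp 1 := by linarith [Real.exp_one_gt_d9]
      rw [h1]
      nlinarith [Real.exp_pos (1/3 : ℝ)]
    have hEpos : (0:ℝ) < Real.exp (4/3) := Real.exp_pos _
    have hM2 : (0:ℝ) < M ^ 2 := by positivity
    rw [div_mul_eq_mul_div, div_le_div_iff₀ (by positivity) (by norm_num)]
    have hinner : ((9/10:ℝ)) ^ 2 / (1 - 9/10) ^ 4 +
        16 / ((9/10:ℝ) ^ 2 * (625 / M ^ 2) * 3) = 8100 + 64 * M ^ 2 / 6075 := by
      field_simp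
      ring
    rw [hinner]
    have hM2' : (10 ^ 8 : ℝ) ≤ M ^ 2 := by nlinarith
    have key : (3.62:ℝ) * M ^ 2 ≤ Real.exp (4/3) * M ^ 2 :=
      mul_le_mul_of_nonneg_right hE hM2.le
    linarith [key]
end

section
/- lim_{M → ∞} inf_{α ∈ (0,1)} (16/(e^{4/3} M²)) · ( α²/(1 − α)⁴ + 16 M²/(1875 α²) ) = 256/(1875 e^{4/3}), and 256/(1875 e^{4/3}) < 1/20. -/
open Filter Topology

noncomputable def gtF (M α : ℝ) : ℝ :=
  16 / (Real.exp (4 / 3) * M ^ 2) *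
    (α ^ 2 / (1 - α) ^ 4 + 16 * M ^ 2 / (1875 * α ^ 2))

lemma gt_lower {M : ℝ} (hM : 0 < M) {α : ℝ} (hα : α ∈ Set.Ioo (0:ℝ) 1) :
    256 / (1875 * Real.exp (4 / 3)) ≤ gtF M α := by
  obtain ⟨h0, h1⟩ := hα
  have he : (0:ℝ) < Real.exp (4/3) := Real.exp_pos _
  have step1 : 16 / (Real.exp (4/3) * M ^ 2) * (16 * M ^ 2 / (1875 * α ^ 2)) ≤ gtF M α := by
    unfold gtF
    have hA : (0:ℝ) ≤ α ^ 2 / (1 - α) ^ 4 := by positivity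
    have hc : (0:ℝ) ≤ 16 / (Real.exp (4/3) * M ^ 2) := by positivity
    nlinarith [mul_nonneg hc hA]
  have step0 : 256 / (1875 * Real.exp (4/3)) ≤
      16 / (Real.exp (4/3) * M ^ 2) * (16 * M ^ 2 / (1875 * α ^ 2)) := by
    have heq : 16 / (Real.exp (4/3) * M ^ 2) * (16 * M ^ 2 / (1875 * α ^ 2))
        = 256 / (1875 * Real.exp (4/3) * α ^ 2) := by
      field_simp
      ring
    rw [heq]
    have hα2 : α ^ 2 ≤ 1 := by nlinarith
    rw [div_le_div_iff₀ (by positivity) (by positivity)]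
    nlinarith
  linarith

lemma gt_pt_mem {M : ℝ} (hM : 1 < M) :
    1 - 1 / Real.sqrt (Real.sqrt M) ∈ Set.Ioo (0:ℝ) 1 := by
  have hM0 : (0:ℝ) ≤ M := by linarith
  have hs1 : 1 < Real.sqrt M := by
    rw [show (1:ℝ) = Real.sqrt 1 by simp]
    exact Real.sqrt_lt_sqrt (by norm_num) hM
  have hs2 : 1 < Real.sqrt (Real.sqrt M) := by
    rw [show (1:ℝ) = Real.sqrt 1 by simp]
    exact Real.sqrt_lt_sqrt (by norm_num) hs1
  have hinv : 1 / Real.sqrt (Real.sqrt M) < 1 := by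
    rw [div_lt_one (by linarith)]; exact hs2
  have hpos : 0 < 1 / Real.sqrt (Real.sqrt M) := by positivity
  constructor <;> linarith

lemma gt_pt_eq {M : ℝ} (hM : 1 < M) :
    gtF M (1 - 1 / Real.sqrt (Real.sqrt M)) =
      16 * (1 - 1 / Real.sqrt (Real.sqrt M)) ^ 2 / (Real.exp (4/3) * M) +
      256 / (1875 * Real.exp (4/3) * (1 - 1 / Real.sqrt (Real.sqrt M)) ^ 2) := by
  set s := Real.sqrt (Real.sqrt M) with hs
  have hM0 : (0:ℝ) < M := by linarith
  have hs1 : 1 < s := by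
    rw [hs, show (1:ℝ) = Real.sqrt 1 by simp]
    refine Real.sqrt_lt_sqrt (by norm_num) ?_
    rw [show (1:ℝ) = Real.sqrt 1 by simp]
    exact Real.sqrt_lt_sqrt (by norm_num) hM
  have hs0 : (0:ℝ) < s := by linarith
  have hs4 : s ^ 4 = M := by
    rw [hs]
    rw [show (4:ℕ) = 2 * 2 by norm_num, pow_mul,
      Real.sq_sqrt (Real.sqrt_nonneg M), Real.sq_sqrt (le_of_lt hM0)]
  have ha0 : (0:ℝ) < 1 - 1/s := by
    have : 1/s < 1 := by rw [div_lt_one hs0]; exact hs1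
    linarith
  have h1ma : 1 - (1 - 1/s) = 1/s := by ring
  unfold gtF
  rw [h1ma, ← hs4]
  have he : (0:ℝ) < Real.exp (4/3) := Real.exp_pos _
  have ha0' : (1:ℝ) - 1/s ≠ 0 := ne_of_gt ha0
  have hsm1 : s - 1 ≠ 0 := by intro h; nlinarith
  field_simp
  ring

lemma gt_tendsto_pt :
    Filter.Tendsto (fun M : ℝ => gtF M (1 - 1 / Real.sqrt (Real.sqrt M)))
      Filter.atTop (nhds (256 / (1875 * Real.exp (4 / 3)))) := by
  have hsq : Filter.Tendsto Real.sqrt atTop atTop := by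
    have h := tendsto_rpow_atTop (by norm_num : (0:ℝ) < 1/2)
    refine h.congr fun x => ?_
    rw [Real.sqrt_eq_rpow]
  have hs : Filter.Tendsto (fun M : ℝ => Real.sqrt (Real.sqrt M)) atTop atTop :=
    hsq.comp hsq
  have h0 : Filter.Tendsto (fun M : ℝ => 1 / Real.sqrt (Real.sqrt M)) atTop (nhds 0) := by
    simpa [one_div, Function.comp_def] using tendsto_inv_atTop_zero.comp hs
  have ha : Filter.Tendsto (fun M : ℝ => 1 - 1 / Real.sqrt (Real.sqrt M)) atTop (nhds 1) := by
    simpa using (tendsto_const_nhds (x := (1:ℝ))).sub h0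
  have ht1 : Filter.Tendsto (fun M : ℝ =>
      16 * (1 - 1 / Real.sqrt (Real.sqrt M)) ^ 2 / (Real.exp (4/3) * M)) atTop (nhds 0) := by
    have hnum : Filter.Tendsto (fun M : ℝ => 16 * (1 - 1 / Real.sqrt (Real.sqrt M)) ^ 2)
        atTop (nhds (16 * 1 ^ 2)) := by
      exact (tendsto_const_nhds.mul (ha.pow 2))
    have hden : Filter.Tendsto (fun M : ℝ => Real.exp (4/3) * M) atTop atTop :=
      Filter.Tendsto.const_mul_atTop (Real.exp_pos _) tendsto_id
    simpa using hnum.div_atTop hden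
  have ht2 : Filter.Tendsto (fun M : ℝ =>
      256 / (1875 * Real.exp (4/3) * (1 - 1 / Real.sqrt (Real.sqrt M)) ^ 2)) atTop
      (nhds (256 / (1875 * Real.exp (4/3)))) := by
    have hden : Filter.Tendsto (fun M : ℝ =>
        1875 * Real.exp (4/3) * (1 - 1 / Real.sqrt (Real.sqrt M)) ^ 2) atTop
        (nhds (1875 * Real.exp (4/3) * 1 ^ 2)) :=
      tendsto_const_nhds.mul (ha.pow 2)
    have := Filter.Tendsto.div (tendsto_const_nhds (x := (256:ℝ))) hden (by positivity)
    simpa [Pi.div_def] using this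
  have := ht1.add ht2
  rw [zero_add] at this
  refine this.congr' ?_
  filter_upwards [eventually_gt_atTop (1:ℝ)] with M hM
  exact (gt_pt_eq hM).symm

theorem gibbons_tirthapura_corollary_limit :
    Filter.Tendsto
      (fun M : ℝ =>
        sInf ((fun α : ℝ =>
          16 / (Real.exp (4 / 3) * M ^ 2) *
            (α ^ 2 / (1 - α) ^ 4 + 16 * M ^ 2 / (1875 * α ^ 2))) ''
          Set.Ioo (0 : ℝ) 1))
      Filter.atTop (nhds (256 / (1875 * Real.exp (4 / 3)))) ∧
    256 / (1875 * Real.exp (4 / 3)) < 1 / 20 := by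
  constructor
  · refine tendsto_of_tendsto_of_tendsto_of_le_of_le'
      (tendsto_const_nhds (x := 256 / (1875 * Real.exp (4 / 3)))) gt_tendsto_pt ?_ ?_
    · filter_upwards [eventually_gt_atTop (1:ℝ)] with M hM
      refine le_csInf ⟨gtF M (1/2), ⟨1/2, by norm_num, rfl⟩⟩ ?_
      rintro x ⟨α, hα, rfl⟩
      exact gt_lower (by linarith) hα
    · filter_upwards [eventually_gt_atTop (1:ℝ)] with M hM
      refine csInf_le ⟨256 / (1875 * Real.exp (4 / 3)), ?_⟩ ⟨_, gt_pt_mem hM, rfl⟩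
      rintro x ⟨α, hα, rfl⟩
      exact gt_lower (by linarith) hα
  · have h1 : (5:ℝ)/3 ≤ Real.exp (2/3) := by
      have := Real.add_one_le_exp (2/3 : ℝ)
      linarith
    have h2 : (25:ℝ)/9 ≤ Real.exp (4/3) := by
      have : Real.exp (4/3) = Real.exp (2/3) * Real.exp (2/3) := by
        rw [← Real.exp_add]; norm_num
      nlinarith [Real.exp_pos (2/3 : ℝ)]
    rw [div_lt_div_iff₀ (by positivity) (by norm_num)]
    nlinarith
end
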